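/- arXiv:1905.12936 — 6 statements merged into one kernel-verified Lean document; each statement's English description precedes it below -/
import Mathlib

section
/- (Lemma 2 of the paper.) Let α, β, γ, δ be real numbers with α·δ − β·γ ≠ 0, let q₁, q₂ : Fin 3 → ℝ[X] be triples of polynomials, let n := max over i of natDegree (q₂ i), let M ∈ Matrix (Fin 3) (Fin 3) ℝ, and let a ∈ RatFunc ℝ. Suppose that for every i ∈ Fin 3 one has, in RatFunc ℝ, algebraMap ((M·q₁) i) = a * Polynomial.aeval ψ (q₂ i). Then (C γ * X + C δ)^n divides the numerator a.num of a in ℝ[X]. -/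
open Polynomial

/-- The Möbius transformation `ψ = (αX+β)/(γX+δ)` as an element of `RatFunc ℝ`. -/
noncomputable def mobius (α β γ δ : ℝ) : RatFunc ℝ :=
  (algebraMap (Polynomial ℝ) (RatFunc ℝ) (C α * X + C β)) /
  (algebraMap (Polynomial ℝ) (RatFunc ℝ) (C γ * X + C δ))

lemma key_id (u v : Polynomial ℝ) (hv : v ≠ 0) (q : Polynomial ℝ) :
    algebraMap (Polynomial ℝ) (RatFunc ℝ)
      (∑ k ∈ Finset.range (q.natDegree + 1), C (q.coeff k) * u ^ k * v ^ (q.natDegree - k))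
    = Polynomial.aeval (algebraMap (Polynomial ℝ) (RatFunc ℝ) u /
        algebraMap (Polynomial ℝ) (RatFunc ℝ) v) q
      * algebraMap (Polynomial ℝ) (RatFunc ℝ) (v ^ q.natDegree) := by
  have hv' : algebraMap (Polynomial ℝ) (RatFunc ℝ) v ≠ 0 :=
    RatFunc.algebraMap_ne_zero hv
  rw [aeval_eq_sum_range, Finset.sum_mul, map_sum]
  refine Finset.sum_congr rfl fun k hk => ?_
  rw [Finset.mem_range, Nat.lt_succ_iff] at hk
  have hc : (algebraMap ℝ (RatFunc ℝ)) (q.coeff k)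
      = algebraMap (Polynomial ℝ) (RatFunc ℝ) (C (q.coeff k)) := by
    rw [IsScalarTower.algebraMap_apply ℝ (Polynomial ℝ) (RatFunc ℝ), Polynomial.algebraMap_eq]
  have hsplit : (algebraMap (Polynomial ℝ) (RatFunc ℝ) v) ^ q.natDegree
      = (algebraMap (Polynomial ℝ) (RatFunc ℝ) v) ^ k *
        (algebraMap (Polynomial ℝ) (RatFunc ℝ) v) ^ (q.natDegree - k) := by
    rw [← pow_add, Nat.add_sub_cancel' hk]
  rw [map_mul, map_mul, map_pow, map_pow, map_pow, Algebra.smul_def, hc, div_pow, hsplit]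
  have hvk : (algebraMap (Polynomial ℝ) (RatFunc ℝ) v) ^ k ≠ 0 := pow_ne_zero _ hv'
  field_simp

/-- Lemma 2 of the paper: `(γX+δ)^n` divides the numerator of `a`. -/
theorem stmt_3 (α β γ δ : ℝ) (h : α * δ - β * γ ≠ 0)
    (q₁ q₂ : Fin 3 → Polynomial ℝ)
    (M : Matrix (Fin 3) (Fin 3) ℝ) (a : RatFunc ℝ)
    (heq : ∀ i, algebraMap (Polynomial ℝ) (RatFunc ℝ) (∑ j, M i j • q₁ j)
      = a * Polynomial.aeval (mobius α β γ δ) (q₂ i)) :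
    (C γ * X + C δ) ^ (Finset.univ.sup fun i => (q₂ i).natDegree) ∣ a.num := by
  obtain ⟨i₀, -, hi₀⟩ :=
    Finset.exists_mem_eq_sup Finset.univ Finset.univ_nonempty fun i => (q₂ i).natDegree
  rw [hi₀]
  set q := q₂ i₀ with hq
  set n := q.natDegree with hn
  by_cases hγ : γ = 0
  · -- (C δ) is a unit
    have hδ : δ ≠ 0 := by intro hδ; apply h; rw [hγ, hδ]; ring
    have : IsUnit (C γ * X + C δ) := by
      rw [hγ]; simpa using (Polynomial.isUnit_C.mpr (isUnit_iff_ne_zero.mpr hδ))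
    exact (this.pow n).dvd
  -- main case
  have hδγ : δ * γ ≠ 0 → True := fun _ => trivial
  set v : Polynomial ℝ := C γ * X + C δ with hv_def
  set u : Polynomial ℝ := C α * X + C β with hu_def
  have hv : v ≠ 0 := by
    intro h0
    have := Polynomial.degree_linear (a := γ) (b := δ) hγ
    rw [← hv_def, h0] at this; simp at this
  set N : Polynomial ℝ :=
    ∑ k ∈ Finset.range (n + 1), C (q.coeff k) * u ^ k * v ^ (n - k) with hN
  have hkey := key_id u v hv q
  rw [← hn, ← hN] at hkey
  have heq₀ := heq i₀
  rw [← hq] at heq₀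
  have hmain : algebraMap (Polynomial ℝ) (RatFunc ℝ) ((∑ j, M i₀ j • q₁ j) * v ^ n)
      = a * algebraMap (Polynomial ℝ) (RatFunc ℝ) N := by
    rw [map_mul, heq₀, hkey, mobius]; ring
  -- multiply by denom
  have hdenom : algebraMap (Polynomial ℝ) (RatFunc ℝ) a.num
      = a * algebraMap (Polynomial ℝ) (RatFunc ℝ) a.denom := by
    have hnd := RatFunc.num_div_denom a
    exact (div_eq_iff (RatFunc.algebraMap_ne_zero a.denom_ne_zero)).mp hnd
  have hpoly : a.num * N = a.denom * ((∑ j, M i₀ j • q₁ j) * v ^ n) := by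
    apply RatFunc.algebraMap_injective
    rw [map_mul, map_mul, hdenom, hmain]
    ring
  have hdvd : v ^ n ∣ a.num * N := by
    rw [hpoly]; exact Dvd.dvd.mul_left (dvd_mul_left _ _) _
  by_cases hn0 : n = 0
  · rw [hn0]; simp
  -- v is prime
  have hvprime : Prime v := by
    have : Irreducible v := Polynomial.irreducible_of_degree_eq_one
      (Polynomial.degree_linear hγ)
    exact this.prime
  -- v does not divide N: evaluate at -δ/γ
  have hNndvd : ¬ v ∣ N := by
    intro hdvdN
    set r : ℝ := -δ / γ with hr
    have hvr : v.eval r = 0 := by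
      simp only [hv_def, eval_add, eval_mul, eval_C, eval_X, hr]
      field_simp
      ring
    have hNr : N.eval r = 0 := by
      obtain ⟨c, hc⟩ := hdvdN
      rw [hc, eval_mul, hvr, zero_mul]
    have hur : u.eval r ≠ 0 := by
      simp only [hu_def, eval_add, eval_mul, eval_C, eval_X, hr]
      intro h0
      apply h
      field_simp at h0
      linarith
    have hqne : q ≠ 0 := by
      intro h0; apply hn0; rw [hn, h0]; simp
    have hcoeff : q.coeff n ≠ 0 := by
      rw [hn]; exact Polynomial.leadingCoeff_ne_zero.mpr hqne
    -- compute N.eval r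
    have : N.eval r = q.coeff n * (u.eval r) ^ n := by
      rw [hN, Polynomial.eval_finset_sum]
      rw [Finset.sum_eq_single n]
      · simp [hvr]
      · intro k hk hkn
        rw [Finset.mem_range, Nat.lt_succ_iff] at hk
        have : n - k ≠ 0 := by omega
        simp [hvr, zero_pow this]
      · intro hmem; exact absurd (Finset.self_mem_range_succ n) hmem
    rw [this] at hNr
    exact (mul_ne_zero hcoeff (pow_ne_zero _ hur)) hNr
  exact hvprime.pow_dvd_of_dvd_mul_right n hNndvd hdvd
end

section
/- (Lemma 3 of the paper.) Let α, β, γ, δ be real numbers with α·δ − β·γ ≠ 0, let q₁, q₂ : Fin 3 → ℝ[X] be triples of polynomials such that the components q₂ 0, q₂ 1, q₂ 2 have only unit common divisors, let M ∈ Matrix (Fin 3) (Fin 3) ℝ, and let a ∈ RatFunc ℝ. Suppose that for every i ∈ Fin 3 one has, in RatFunc ℝ, algebraMap ((M·q₁) i) = a * Polynomial.aeval ψ (q₂ i). Then the denominator a.denom of a is the constant polynomial 1; i.e., a is (the image of) a polynomial. -/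
open Polynomial

/-- The homogeneous Möbius transform of a polynomial. -/
noncomputable def mtrans (α β γ δ : ℝ) (u : Polynomial ℝ) : Polynomial ℝ :=
  ∑ k ∈ Finset.range (u.natDegree + 1),
    C (u.coeff k) * (C α * X + C β) ^ k * (C γ * X + C δ) ^ (u.natDegree - k)

lemma mobius_key (α β γ δ : ℝ) (hD : (C γ * X + C δ : Polynomial ℝ) ≠ 0) (u : Polynomial ℝ) :
    Polynomial.aeval (mobius α β γ δ) u
      * (algebraMap (Polynomial ℝ) (RatFunc ℝ) (C γ * X + C δ)) ^ u.natDegree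
    = algebraMap (Polynomial ℝ) (RatFunc ℝ) (mtrans α β γ δ u) := by
  have hDm : algebraMap (Polynomial ℝ) (RatFunc ℝ) (C γ * X + C δ) ≠ 0 :=
    RatFunc.algebraMap_ne_zero hD
  rw [aeval_eq_sum_range, mtrans, map_sum, Finset.sum_mul]
  refine Finset.sum_congr rfl fun k hk => ?_
  have hk' : k ≤ u.natDegree := Nat.lt_succ_iff.mp (Finset.mem_range.mp hk)
  rw [map_mul, map_mul, map_pow, map_pow]
  rw [← pow_mul_pow_sub (algebraMap (Polynomial ℝ) (RatFunc ℝ) (C γ * X + C δ)) hk']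
  rw [Algebra.smul_def, mobius, div_pow]
  have hC : algebraMap ℝ (RatFunc ℝ) (u.coeff k)
      = algebraMap (Polynomial ℝ) (RatFunc ℝ) (C (u.coeff k)) := by
    simp [RatFunc.algebraMap_C]
  rw [hC, mul_assoc,
    ← mul_assoc ((algebraMap (Polynomial ℝ) (RatFunc ℝ)) (C α * X + C β) ^ k /
      (algebraMap (Polynomial ℝ) (RatFunc ℝ)) (C γ * X + C δ) ^ k),
    div_mul_cancel₀ _ (pow_ne_zero k hDm), mul_assoc]

/-- Lemma 3 of the paper: the denominator of `a` is constant, i.e. `a` is a polynomial. -/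
theorem stmt_4 (α β γ δ : ℝ) (h : α * δ - β * γ ≠ 0)
    (q₁ q₂ : Fin 3 → Polynomial ℝ)
    (hc2 : ∀ d : Polynomial ℝ, (∀ i, d ∣ q₂ i) → IsUnit d)
    (M : Matrix (Fin 3) (Fin 3) ℝ) (a : RatFunc ℝ)
    (heq : ∀ i, algebraMap (Polynomial ℝ) (RatFunc ℝ) (∑ j, M i j • q₁ j)
      = a * Polynomial.aeval (mobius α β γ δ) (q₂ i)) :
    a.denom = 1 := by
  set D : Polynomial ℝ := C γ * X + C δ with hDdef
  set φ := algebraMap (Polynomial ℝ) (RatFunc ℝ) with hφ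
  have hD : D ≠ 0 := by
    intro h0
    have h1 : D.coeff 0 = 0 := by rw [h0]; simp
    have h2 : D.coeff 1 = 0 := by rw [h0]; simp
    simp [hDdef, coeff_add, coeff_C_mul] at h1 h2
    apply h; rw [h2, h1]; ring
  have hDm : φ D ≠ 0 := RatFunc.algebraMap_ne_zero hD
  -- Bezout
  obtain ⟨u, hu⟩ : ∃ u : Fin 3 → Polynomial ℝ, ∑ i, u i * q₂ i = 1 := by
    have h1 : (1 : Polynomial ℝ) ∈ Ideal.span (Set.range q₂) := by
      set I := Ideal.span (Set.range q₂) with hI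
      have hg : IsUnit (Submodule.IsPrincipal.generator I) := by
        refine hc2 _ fun i => ?_
        exact (Submodule.IsPrincipal.mem_iff_generator_dvd I).mp
          (Ideal.subset_span (Set.mem_range_self i))
      have : I = ⊤ := Ideal.eq_top_of_isUnit_mem I (Submodule.IsPrincipal.generator_mem I) hg
      rw [this]; trivial
    obtain ⟨c, hc⟩ := (Submodule.mem_span_range_iff_exists_fun (Polynomial ℝ)).mp h1
    exact ⟨c, by simpa [smul_eq_mul] using hc⟩
  -- a as a combination
  set ψ := mobius α β γ δ with hψ
  have ha : a = ∑ i, Polynomial.aeval ψ (u i) * φ (∑ j, M i j • q₁ j) := by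
    calc a = a * Polynomial.aeval ψ (∑ i, u i * q₂ i) := by rw [hu]; simp
    _ = ∑ i, Polynomial.aeval ψ (u i) * (a * Polynomial.aeval ψ (q₂ i)) := by
        rw [map_sum, Finset.mul_sum]; exact Finset.sum_congr rfl fun i _ => by
          rw [map_mul]; ring
    _ = _ := Finset.sum_congr rfl fun i _ => by rw [← heq i]
  set N : ℕ := ∑ i, (u i).natDegree with hN
  set F : Polynomial ℝ := ∑ i, mtrans α β γ δ (u i) * D ^ (N - (u i).natDegree)
      * (∑ j, M i j • q₁ j) with hF
  have haF : a * (φ D) ^ N = φ F := by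
    rw [ha, Finset.sum_mul, hF, map_sum]
    refine Finset.sum_congr rfl fun i _ => ?_
    have hle : (u i).natDegree ≤ N :=
      Finset.single_le_sum (f := fun j => (u j).natDegree) (fun _ _ => Nat.zero_le _)
        (Finset.mem_univ i)
    rw [map_mul, map_mul, map_pow, ← mobius_key α β γ δ hD (u i),
      ← pow_mul_pow_sub (φ D) hle]
    ring
  have hdvdN : a.denom ∣ D ^ N := by
    refine (RatFunc.denom_dvd (pow_ne_zero _ hD)).mpr ⟨F, ?_⟩
    rw [eq_div_iff (by rw [map_pow]; exact pow_ne_zero _ hDm), ← haF, map_pow]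
  -- choose a nonzero q₂ i
  obtain ⟨i₀, hq0⟩ : ∃ i, q₂ i ≠ 0 := by
    by_contra h'
    push_neg at h'
    exact Polynomial.not_isUnit_X (hc2 X (fun i => (h' i) ▸ dvd_zero X))
  by_cases hγ : γ = 0
  · -- D is a unit
    have hδ : δ ≠ 0 := fun h0 => h (by rw [hγ, h0]; ring)
    have : IsUnit (D ^ N) := by
      have : D = C δ := by rw [hDdef, hγ]; simp
      rw [this, ← map_pow]
      exact Polynomial.isUnit_C.mpr (pow_ne_zero N hδ).isUnit
    exact (RatFunc.monic_denom a).eq_one_of_isUnit (isUnit_of_dvd_unit hdvdN this)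
  · set x₀ : ℝ := -δ / γ with hx₀
    have hDx : D.eval x₀ = 0 := by
      simp only [hDdef, eval_add, eval_mul, eval_C, eval_X, hx₀]
      field_simp
      ring
    have hAx : (C α * X + C β : Polynomial ℝ).eval x₀ ≠ 0 := by
      simp only [eval_add, eval_mul, eval_C, eval_X, hx₀]
      intro h0
      apply h
      field_simp at h0
      linarith
    set m := (q₂ i₀).natDegree with hm
    set T : Polynomial ℝ := mtrans α β γ δ (q₂ i₀) with hT
    have hTx : T.eval x₀ ≠ 0 := by
      rw [hT, mtrans, eval_finset_sum]
      rw [Finset.sum_eq_single m]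
      · simp only [eval_mul, eval_pow, eval_C, ← hm, Nat.sub_self, pow_zero, mul_one]
        exact mul_ne_zero (leadingCoeff_ne_zero.mpr hq0) (pow_ne_zero _ hAx)
      · intro k hk hkm
        have hk' : k < m := lt_of_le_of_ne (Nat.lt_succ_iff.mp (Finset.mem_range.mp hk)) hkm
        simp only [eval_mul, eval_pow]
        rw [show (C γ * X + C δ : Polynomial ℝ) = D from rfl, hDx,
          zero_pow (Nat.sub_ne_zero_of_lt hk')]
        ring
      · intro hm'
        exact absurd (Finset.self_mem_range_succ m) hm'
    have hTne : T ≠ 0 := fun h0 => hTx (by rw [h0]; simp)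
    have hdvdT : a.denom ∣ T := by
      refine (RatFunc.denom_dvd hTne).mpr ⟨(∑ j, M i₀ j • q₁ j) * D ^ m, ?_⟩
      rw [eq_div_iff (RatFunc.algebraMap_ne_zero hTne)]
      rw [← mobius_key α β γ δ hD (q₂ i₀), map_mul, heq i₀, map_pow]
      ring
    have hdx : a.denom.eval x₀ ≠ 0 := by
      obtain ⟨w, hw⟩ := hdvdT
      intro h0
      apply hTx
      rw [hw, eval_mul, h0, zero_mul]
    -- D = C γ * (X - C x₀)
    have hDfac : D = C γ * (X - C x₀) := by
      rw [hDdef]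
      rw [mul_sub, ← C_mul]
      have : γ * x₀ = -δ := by rw [hx₀]; field_simp
      rw [this, map_neg, sub_neg_eq_add]
    have hdvd2 : a.denom ∣ (X - C x₀) ^ N := by
      have : D ^ N = C γ ^ N * (X - C x₀) ^ N := by rw [hDfac, mul_pow]
      rw [this] at hdvdN
      exact (IsUnit.dvd_mul_left (IsUnit.pow N (Polynomial.isUnit_C.mpr (isUnit_iff_ne_zero.mpr hγ)))).mp hdvdN
    obtain ⟨i, _, hassoc⟩ := (dvd_prime_pow (prime_X_sub_C x₀) N).mp hdvd2
    have heq' : a.denom = (X - C x₀) ^ i :=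
      eq_of_monic_of_associated (RatFunc.monic_denom a) ((monic_X_sub_C x₀).pow i) hassoc
    have : i = 0 := by
      by_contra hi
      apply hdx
      rw [heq']
      simp [zero_pow hi]
    rw [heq', this, pow_zero]
end

section
/- Let α, β, γ, δ be real numbers with α·δ − β·γ ≠ 0, and let q₁, q₂, q₃ ∈ ℝ[X] be polynomials, not all zero, having only unit common divisors. For each i let Nᵢ := N_{ℓᵢ}(qᵢ) be the homogenized Möbius composite with ℓᵢ := natDegree qᵢ. Then N₁, N₂, N₃ have only unit common divisors in ℝ[X]. -/
open Polynomial

/-- The homogenized Möbius composite `N_ℓ(q)`. -/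
noncomputable def Nhom (α β γ δ : ℝ) (ℓ : ℕ) (q : Polynomial ℝ) : Polynomial ℝ :=
  ∑ j ∈ Finset.range (ℓ + 1),
    (q.coeff j) • ((C α * X + C β) ^ j * (C γ * X + C δ) ^ (ℓ - j))

lemma linear_ne (γ δ : ℝ) (h : ¬(γ = 0 ∧ δ = 0)) : (C γ * X + C δ : Polynomial ℝ) ≠ 0 := by
  intro h0
  apply h
  constructor
  · have := congrArg (fun p => Polynomial.coeff p 1) h0
    simpa using this
  · have := congrArg (fun p => Polynomial.coeff p 0) h0
    simpa using this

lemma natDegree_Nhom_le (α β γ δ : ℝ) (ℓ : ℕ) (q : Polynomial ℝ) :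
    (Nhom α β γ δ ℓ q).natDegree ≤ ℓ := by
  refine Polynomial.natDegree_sum_le_of_forall_le _ _ fun j hj => ?_
  have hj' : j ≤ ℓ := Nat.lt_succ_iff.mp (Finset.mem_range.mp hj)
  refine (Polynomial.natDegree_smul_le _ _).trans ?_
  refine (Polynomial.natDegree_mul_le).trans ?_
  have h1 : ((C α * X + C β : Polynomial ℝ) ^ j).natDegree ≤ j := by
    refine (Polynomial.natDegree_pow_le).trans ?_
    have := Polynomial.natDegree_linear_le (a := α) (b := β)
    nlinarith
  have h2 : ((C γ * X + C δ : Polynomial ℝ) ^ (ℓ - j)).natDegree ≤ ℓ - j := by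
    refine (Polynomial.natDegree_pow_le).trans ?_
    have := Polynomial.natDegree_linear_le (a := γ) (b := δ)
    nlinarith
  omega

noncomputable abbrev φ : Polynomial ℝ →+* RatFunc ℝ := algebraMap (Polynomial ℝ) (RatFunc ℝ)

lemma φ_inj : Function.Injective φ := IsFractionRing.injective (Polynomial ℝ) (RatFunc ℝ)

lemma map_Nhom (α β γ δ : ℝ) (ℓ : ℕ) (q : Polynomial ℝ)
    (hB : (C γ * X + C δ : Polynomial ℝ) ≠ 0) (hq : q.natDegree ≤ ℓ) :
    φ (Nhom α β γ δ ℓ q)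
      = (φ (C γ * X + C δ)) ^ ℓ
        * Polynomial.aeval (φ (C α * X + C β) / φ (C γ * X + C δ)) q := by
  have hφB : φ (C γ * X + C δ) ≠ 0 := fun h0 => hB (φ_inj (by simpa using h0))
  rw [Nhom, map_sum, Polynomial.aeval_eq_sum_range' (Nat.lt_succ_of_le hq), Finset.mul_sum]
  refine Finset.sum_congr rfl fun j hj => ?_
  have hj' : j ≤ ℓ := Nat.lt_succ_iff.mp (Finset.mem_range.mp hj)
  rw [Polynomial.smul_eq_C_mul, map_mul, map_mul, map_pow, map_pow, Algebra.smul_def]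
  have hC : (algebraMap ℝ (RatFunc ℝ)) (q.coeff j) = φ (C (q.coeff j)) := by
    rw [IsScalarTower.algebraMap_apply ℝ (Polynomial ℝ) (RatFunc ℝ)]
    rfl
  rw [hC, div_pow, pow_sub₀ _ hφB hj']
  field_simp

lemma hBne (α β γ δ : ℝ) (h : α * δ - β * γ ≠ 0) : (C γ * X + C δ : Polynomial ℝ) ≠ 0 := by
  refine linear_ne _ _ fun ⟨h1, h2⟩ => h (by rw [h1, h2]; ring)

lemma Nhom_mul (α β γ δ : ℝ) (h : α * δ - β * γ ≠ 0) (a b : ℕ) (p q : Polynomial ℝ)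
    (hp : p.natDegree ≤ a) (hq : q.natDegree ≤ b) :
    Nhom α β γ δ (a + b) (p * q) = Nhom α β γ δ a p * Nhom α β γ δ b q := by
  have hB := hBne α β γ δ h
  apply φ_inj
  rw [map_mul, map_Nhom α β γ δ _ _ hB (Polynomial.natDegree_mul_le.trans (add_le_add hp hq)),
    map_Nhom α β γ δ _ _ hB hp, map_Nhom α β γ δ _ _ hB hq, map_mul, pow_add]
  ring

lemma Nhom_sum {ι : Type*} (α β γ δ : ℝ) (ℓ : ℕ) (s : Finset ι) (f : ι → Polynomial ℝ) :
    Nhom α β γ δ ℓ (∑ i ∈ s, f i) = ∑ i ∈ s, Nhom α β γ δ ℓ (f i) := by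
  simp only [Nhom, Polynomial.finset_sum_coeff, Finset.sum_smul]
  exact Finset.sum_comm

lemma Nhom_smul (α β γ δ : ℝ) (ℓ : ℕ) (c : ℝ) (q : Polynomial ℝ) :
    Nhom α β γ δ ℓ (c • q) = c • Nhom α β γ δ ℓ q := by
  simp [Nhom, Finset.smul_sum, smul_smul]

lemma Nhom_zero (α β γ δ : ℝ) (ℓ : ℕ) : Nhom α β γ δ ℓ 0 = 0 := by
  simp [Nhom]

lemma Nhom_linear (α β γ δ a b : ℝ) :
    Nhom α β γ δ 1 (C a * X + C b)
      = C (a * α + b * γ) * X + C (a * β + b * δ) := by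
  simp only [Nhom, Finset.sum_range_succ]
  simp [Polynomial.smul_eq_C_mul]
  ring

lemma Nhom_C (α β γ δ c : ℝ) (n : ℕ) :
    Nhom α β γ δ n (C c) = c • (C γ * X + C δ) ^ n := by
  rw [Nhom]
  rw [Finset.sum_eq_single 0]
  · simp
  · intro j hj hj0
    simp [coeff_C, hj0]
  · simp

lemma Nhom_pow (α β γ δ : ℝ) (h : α * δ - β * γ ≠ 0) (p : Polynomial ℝ)
    (hp : p.natDegree ≤ 1) (n : ℕ) :
    Nhom α β γ δ n (p ^ n) = (Nhom α β γ δ 1 p) ^ n := by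
  induction n with
  | zero => simp [Nhom]
  | succ n ih =>
      have hpn : (p ^ n).natDegree ≤ n :=
        (Polynomial.natDegree_pow_le).trans (by nlinarith)
      calc Nhom α β γ δ (n + 1) (p ^ (n + 1))
          = Nhom α β γ δ (1 + n) (p * p ^ n) := by rw [pow_succ, add_comm, mul_comm]
        _ = Nhom α β γ δ 1 p * Nhom α β γ δ n (p ^ n) := Nhom_mul α β γ δ h 1 n p (p ^ n) hp hpn
        _ = (Nhom α β γ δ 1 p) ^ (n + 1) := by rw [ih, pow_succ, mul_comm]

lemma Nhom_inv (α β γ δ : ℝ) (h : α * δ - β * γ ≠ 0) (ℓ : ℕ) (q : Polynomial ℝ)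
    (hq : q.natDegree ≤ ℓ) :
    Nhom δ (-β) (-γ) α ℓ (Nhom α β γ δ ℓ q) = (α * δ - β * γ) ^ ℓ • q := by
  have h' : δ * α - -β * -γ ≠ 0 := by ring_nf; ring_nf at h; exact fun h0 => h (by linarith)
  nth_rewrite 2 [Nhom]
  rw [Nhom_sum]
  have key : ∀ j ∈ Finset.range (ℓ + 1),
      Nhom δ (-β) (-γ) α ℓ
        (q.coeff j • ((C α * X + C β) ^ j * (C γ * X + C δ) ^ (ℓ - j)))
      = q.coeff j • ((α * δ - β * γ) ^ ℓ • (X : Polynomial ℝ) ^ j) := by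
    intro j hj
    have hj' : j ≤ ℓ := Nat.lt_succ_iff.mp (Finset.mem_range.mp hj)
    rw [Nhom_smul]
    congr 1
    have e1 : ((C α * X + C β : Polynomial ℝ) ^ j).natDegree ≤ j :=
      (Polynomial.natDegree_pow_le).trans
        (by nlinarith [Polynomial.natDegree_linear_le (a := α) (b := β)])
    have e2 : ((C γ * X + C δ : Polynomial ℝ) ^ (ℓ - j)).natDegree ≤ ℓ - j :=
      (Polynomial.natDegree_pow_le).trans
        (by nlinarith [Polynomial.natDegree_linear_le (a := γ) (b := δ)])
    have : Nhom δ (-β) (-γ) α ℓ ((C α * X + C β) ^ j * (C γ * X + C δ) ^ (ℓ - j))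
        = Nhom δ (-β) (-γ) α j ((C α * X + C β) ^ j)
          * Nhom δ (-β) (-γ) α (ℓ - j) ((C γ * X + C δ) ^ (ℓ - j)) := by
      rw [← Nhom_mul δ (-β) (-γ) α h' j (ℓ - j) _ _ e1 e2, Nat.add_sub_cancel' hj']
    rw [this, Nhom_pow δ (-β) (-γ) α h' _ Polynomial.natDegree_linear_le,
      Nhom_pow δ (-β) (-γ) α h' _ Polynomial.natDegree_linear_le,
      Nhom_linear, Nhom_linear]
    have eA : C (α * δ + β * -γ) * X + C (α * -β + β * α) = C (α * δ - β * γ) * (X : Polynomial ℝ) := by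
      rw [mul_comm (C _) (X : Polynomial ℝ)]
      ring_nf
      simp
    have eB : C (γ * δ + δ * -γ) * X + C (γ * -β + δ * α) = (C (α * δ - β * γ) : Polynomial ℝ) := by
      ring_nf
      simp
    rw [eA, eB, mul_pow, ← Polynomial.C_pow, ← Polynomial.C_pow, Polynomial.smul_eq_C_mul,
      mul_right_comm, ← Polynomial.C_mul, ← pow_add,
      Nat.add_sub_cancel' hj']
  rw [Finset.sum_congr rfl key]
  have key2 : ∀ j ∈ Finset.range (ℓ + 1),
      q.coeff j • (α * δ - β * γ) ^ ℓ • (X : Polynomial ℝ) ^ j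
        = (α * δ - β * γ) ^ ℓ • (Polynomial.monomial j (q.coeff j)) := fun j _ => by
    rw [smul_comm, Polynomial.smul_X_eq_monomial]
  rw [Finset.sum_congr rfl key2, ← Finset.smul_sum]
  congr 1
  exact (Polynomial.as_sum_range' q (ℓ + 1) (Nat.lt_succ_of_le hq)).symm

lemma dvd_of_dvd_smul (c : ℝ) (hc : c ≠ 0) (d p : Polynomial ℝ) (h : d ∣ c • p) : d ∣ p := by
  have : p = c⁻¹ • (c • p) := by rw [smul_smul, inv_mul_cancel₀ hc, one_smul]
  rw [this, Polynomial.smul_eq_C_mul]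
  exact h.mul_left _

lemma Nhom_ne_zero (α β γ δ : ℝ) (h : α * δ - β * γ ≠ 0) (ℓ : ℕ) (q : Polynomial ℝ)
    (hq : q.natDegree ≤ ℓ) (hq0 : q ≠ 0) : Nhom α β γ δ ℓ q ≠ 0 := by
  intro h0
  apply hq0
  have := Nhom_inv α β γ δ h ℓ q hq
  rw [h0, Nhom_zero] at this
  have hd : (α * δ - β * γ) ^ ℓ ≠ 0 := pow_ne_zero _ h
  rw [eq_comm, smul_eq_zero] at this
  tauto

lemma det_flip (α β γ δ : ℝ) (h : α * δ - β * γ ≠ 0) : δ * α - -β * -γ ≠ 0 := by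
  intro h0; apply h; linarith [h0]; 

lemma Nhom_inv' (α β γ δ : ℝ) (h : α * δ - β * γ ≠ 0) (a : ℕ) (p : Polynomial ℝ)
    (hp : p.natDegree ≤ a) :
    Nhom α β γ δ a (Nhom δ (-β) (-γ) α a p) = (α * δ - β * γ) ^ a • p := by
  have := Nhom_inv δ (-β) (-γ) α (det_flip α β γ δ h) a p hp
  rw [neg_neg, neg_neg] at this
  rw [this]
  congr 1
  ring

lemma step (α β γ δ : ℝ) (h : α * δ - β * γ ≠ 0) (p q : Polynomial ℝ)
    (hpq : p ∣ Nhom α β γ δ q.natDegree q) :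
    Nhom δ (-β) (-γ) α p.natDegree p ∣ q := by
  by_cases hq0 : q = 0
  · simp [hq0]
  have h' := det_flip α β γ δ h
  set ℓ := q.natDegree with hℓ
  set N := Nhom α β γ δ ℓ q with hN
  have hN0 : N ≠ 0 := Nhom_ne_zero α β γ δ h ℓ q le_rfl hq0
  obtain ⟨r, hr⟩ := hpq
  have hp0 : p ≠ 0 := by rintro rfl; exact hN0 (by simpa using hr)
  have hr0 : r ≠ 0 := by rintro rfl; exact hN0 (by simpa using hr)
  have hdegs : N.natDegree = p.natDegree + r.natDegree := by
    rw [hr]; exact Polynomial.natDegree_mul hp0 hr0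
  have hNdeg : N.natDegree ≤ ℓ := natDegree_Nhom_le α β γ δ ℓ q
  have ha : p.natDegree ≤ ℓ := by omega
  have hb : r.natDegree ≤ ℓ - p.natDegree := by omega
  have hmul := Nhom_mul δ (-β) (-γ) α h' p.natDegree (ℓ - p.natDegree) p r le_rfl hb
  rw [Nat.add_sub_cancel' ha] at hmul
  have hinv : Nhom δ (-β) (-γ) α ℓ N = (α * δ - β * γ) ^ ℓ • q := by
    have := Nhom_inv α β γ δ h ℓ q le_rfl
    rw [← hN] at this
    exact this
  refine dvd_of_dvd_smul ((α * δ - β * γ) ^ ℓ) (pow_ne_zero _ h) _ _ ?_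
  rw [← hinv, hN, hr, hℓ] at *
  exact Dvd.intro _ hmul.symm

lemma final (α β γ δ : ℝ) (h : α * δ - β * γ ≠ 0) (hγ : γ ≠ 0) (q : Polynomial ℝ)
    (hq0 : q ≠ 0) (hBN : (C γ * X + C δ) ∣ Nhom α β γ δ q.natDegree q) : False := by
  set ℓ := q.natDegree with hℓ
  set B : Polynomial ℝ := C γ * X + C δ with hB
  set A : Polynomial ℝ := C α * X + C β with hA
  have hsplit : Nhom α β γ δ ℓ q
      = (∑ j ∈ Finset.range ℓ, q.coeff j • (A ^ j * B ^ (ℓ - j))) + q.coeff ℓ • A ^ ℓ := by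
    rw [Nhom, Finset.sum_range_succ, Nat.sub_self, pow_zero, mul_one]
  have hS : B ∣ ∑ j ∈ Finset.range ℓ, q.coeff j • (A ^ j * B ^ (ℓ - j)) := by
    refine Finset.dvd_sum fun j hj => ?_
    have hjℓ : j < ℓ := Finset.mem_range.mp hj
    rw [Polynomial.smul_eq_C_mul]
    exact ((dvd_pow_self B (by omega : ℓ - j ≠ 0)).mul_left _).mul_left _
  have hlead : B ∣ q.coeff ℓ • A ^ ℓ := by
    have := dvd_sub hBN hS
    rw [hsplit] at this
    simpa using this
  have hAℓ : B ∣ A ^ ℓ :=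
    dvd_of_dvd_smul _ (Polynomial.leadingCoeff_ne_zero.mpr hq0) _ _ hlead
  obtain ⟨t, ht⟩ := hAℓ
  have := congrArg (Polynomial.eval (-δ / γ)) ht
  rw [Polynomial.eval_pow] at this
  have hBe : Polynomial.eval (-δ / γ) B = 0 := by
    simp only [hB, Polynomial.eval_add, Polynomial.eval_mul, Polynomial.eval_C,
      Polynomial.eval_X]
    field_simp
    ring
  have hAe : Polynomial.eval (-δ / γ) A ≠ 0 := by
    simp only [hA, Polynomial.eval_add, Polynomial.eval_mul, Polynomial.eval_C,
      Polynomial.eval_X]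
    intro h0
    apply h
    field_simp at h0
    linarith
  rw [Polynomial.eval_mul, hBe, zero_mul] at this
  exact pow_ne_zero ℓ hAe this

/-- If `q₁, q₂, q₃` (not all zero) have only unit common divisors, then so do their
homogenized Möbius composites `N_{ℓᵢ}(qᵢ)` with `ℓᵢ = natDegree qᵢ`. -/
theorem stmt_5 (α β γ δ : ℝ) (h : α * δ - β * γ ≠ 0)
    (q₁ q₂ q₃ : Polynomial ℝ) (hne : ¬(q₁ = 0 ∧ q₂ = 0 ∧ q₃ = 0))
    (hcop : ∀ d : Polynomial ℝ, d ∣ q₁ → d ∣ q₂ → d ∣ q₃ → IsUnit d) :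
    ∀ d : Polynomial ℝ,
      d ∣ Nhom α β γ δ q₁.natDegree q₁ →
      d ∣ Nhom α β γ δ q₂.natDegree q₂ →
      d ∣ Nhom α β γ δ q₃.natDegree q₃ → IsUnit d := by
  intro d hd1 hd2 hd3
  by_contra hu
  have hq : q₁ ≠ 0 ∨ q₂ ≠ 0 ∨ q₃ ≠ 0 := by tauto
  have hd0 : d ≠ 0 := by
    rcases hq with hq | hq | hq
    · exact ne_zero_of_dvd_ne_zero (Nhom_ne_zero α β γ δ h _ _ le_rfl hq) hd1
    · exact ne_zero_of_dvd_ne_zero (Nhom_ne_zero α β γ δ h _ _ le_rfl hq) hd2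
    · exact ne_zero_of_dvd_ne_zero (Nhom_ne_zero α β γ δ h _ _ le_rfl hq) hd3
  obtain ⟨p, hpirr, hpd⟩ := WfDvdMonoid.exists_irreducible_factor hu hd0
  have hP1 := step α β γ δ h p q₁ (hpd.trans hd1)
  have hP2 := step α β γ δ h p q₂ (hpd.trans hd2)
  have hP3 := step α β γ δ h p q₃ (hpd.trans hd3)
  have hPu := hcop _ hP1 hP2 hP3
  obtain ⟨c, hcu, hc⟩ := Polynomial.isUnit_iff.mp hPu
  have hc0 : c ≠ 0 := hcu.ne_zero
  have ha0 : 0 < p.natDegree := hpirr.natDegree_pos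
  have hinv := Nhom_inv' α β γ δ h p.natDegree p le_rfl
  rw [← hc, Nhom_C] at hinv
  by_cases hγ : γ = 0
  · subst hγ
    have := congrArg Polynomial.natDegree hinv
    rw [Polynomial.smul_eq_C_mul, Polynomial.smul_eq_C_mul,
      Polynomial.natDegree_C_mul hc0, Polynomial.natDegree_C_mul (pow_ne_zero _ h)] at this
    rw [show (C (0:ℝ) * X + C δ : Polynomial ℝ) = C δ by simp, ← Polynomial.C_pow,
      Polynomial.natDegree_C] at this
    omega
  · have hBp : (C γ * X + C δ) ∣ p := by
      refine dvd_of_dvd_smul ((α * δ - β * γ) ^ p.natDegree) (pow_ne_zero _ h) _ _ ?_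
      rw [← hinv, Polynomial.smul_eq_C_mul]
      exact (dvd_pow_self _ (by omega : p.natDegree ≠ 0)).mul_left _
    rcases hq with hq | hq | hq
    · exact final α β γ δ h hγ q₁ hq (hBp.trans (hpd.trans hd1))
    · exact final α β γ δ h hγ q₂ hq (hBp.trans (hpd.trans hd2))
    · exact final α β γ δ h hγ q₃ hq (hBp.trans (hpd.trans hd3))
end

section
/- (Proposition 3 of the paper.) Let α, β, γ, δ be real numbers with α·δ − β·γ ≠ 0, let M ∈ Matrix (Fin 3) (Fin 3) ℝ be invertible, and let q₁, q₂ : Fin 3 → ℝ[X] be triples of polynomials, each of whose three components has only unit common divisors (in particular, not all components are zero). Let n := max over i of natDegree (q₂ i), and let a ∈ RatFunc ℝ satisfy, for every i ∈ Fin 3, algebraMap ((M·q₁) i) = a * Polynomial.aeval ψ (q₂ i) in RatFunc ℝ. Then there exists a nonzero real number k such that a = algebraMap (C k * (C γ * X + C δ)^n). -/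
/-!
Write `u = γX + δ` and `n` for the top degree of the `q₂ i`. Clearing denominators, `u^n · q(ψ)`
is the polynomial `H q` obtained by evaluating the degree-`n` homogenization of `q` at
`(αX + β, γX + δ)`. With `a = f / g`, the hypotheses become `(u^n g) · (M q₁)_i = f · H (q₂ i)`.
Both families `(M q₁)_i` and `H (q₂ i)` have only unit common divisors: the first since `M` is
invertible, the second since the inverse Möbius transformation undoes `H` up to the unit
`(αδ - βγ)^n`. Comparing greatest common divisors gives `f ~ u^n g`, i.e. `a = k u^n`.
-/

open Polynomial

open scoped Matrix

def IsRelPrimeFamily {α ι : Type*} [Monoid α] (f : ι → α) : Prop :=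
  ∀ d, (∀ i, d ∣ f i) → IsUnit d

theorem IsRelPrimeFamily.of_mulVec {R ι : Type*} [CommRing R] [Fintype ι] {N : Matrix ι ι R}
    {w : ι → R} (h : IsRelPrimeFamily (N *ᵥ w)) : IsRelPrimeFamily w :=
  fun d hd => h d fun _ => Finset.dvd_sum fun j _ => (hd j).mul_left _

theorem IsRelPrimeFamily.sum_smul {R A ι : Type*} [CommRing R] [CommRing A] [Algebra R A]
    [Fintype ι] [DecidableEq ι] {M : Matrix ι ι R} (hM : IsUnit M) {q : ι → A}
    (hq : IsRelPrimeFamily q) : IsRelPrimeFamily fun i => ∑ j, M i j • q j := by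
  set M' := M.map (algebraMap R A)
  have hM' : IsUnit M' := hM.map (algebraMap R A).mapMatrix
  have hMq : (fun i => ∑ j, M i j • q j) = M' *ᵥ q := by
    ext i
    simp [M', Matrix.mulVec, dotProduct, Algebra.smul_def]
  rw [hMq]
  refine IsRelPrimeFamily.of_mulVec (N := M'⁻¹) ?_
  rwa [Matrix.mulVec_mulVec, Matrix.nonsing_inv_mul _ ((Matrix.isUnit_iff_isUnit_det _).mp hM'),
    Matrix.one_mulVec]

theorem IsRelPrimeFamily.gcd_eq_one {α ι : Type*} [CommMonoidWithZero α] [NormalizedGCDMonoid α]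
    [Fintype ι] {f : ι → α} (hf : IsRelPrimeFamily f) : Finset.univ.gcd f = 1 := by
  rw [← Finset.normalize_gcd, normalize_eq_one]
  exact hf _ fun i => Finset.gcd_dvd (Finset.mem_univ i)

theorem IsRelPrimeFamily.exists_ne_zero {α ι : Type*} [MonoidWithZero α] [Nontrivial α]
    {f : ι → α} (hf : IsRelPrimeFamily f) : ∃ i, f i ≠ 0 := by
  by_contra! h0
  exact not_isUnit_zero (hf 0 fun i => by rw [h0 i])

theorem associated_of_forall_mul_eq_mul {α ι : Type*} [CommMonoidWithZero α]
    [NormalizedGCDMonoid α] [Fintype ι] {p q : ι → α} (hp : IsRelPrimeFamily p)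
    (hq : IsRelPrimeFamily q) {x y : α} (h : ∀ i, x * p i = y * q i) : Associated x y := by
  have hx := Finset.gcd_mul_left' Finset.univ p x
  have hy := Finset.gcd_mul_left' Finset.univ q y
  rw [hp.gcd_eq_one, mul_one] at hx
  rw [hq.gcd_eq_one, mul_one, ← funext h] at hy
  exact hx.symm.trans hy

theorem Polynomial.exists_ne_zero_natDegree_eq_sup {R ι : Type*} [Semiring R] [Fintype ι]
    {q : ι → R[X]} (h : ∃ i, q i ≠ 0) :
    ∃ i, q i ≠ 0 ∧ (q i).natDegree = Finset.univ.sup fun j => (q j).natDegree := by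
  classical
  obtain ⟨i₀, hi₀⟩ := h
  obtain ⟨i, hi, hmax⟩ := Finset.exists_max_image (Finset.univ.filter fun j => q j ≠ 0)
    (fun j => (q j).natDegree) ⟨i₀, by simp [hi₀]⟩
  refine ⟨i, (Finset.mem_filter.mp hi).2,
    le_antisymm (Finset.le_sup (f := fun j => (q j).natDegree) (Finset.mem_univ i))
    (Finset.sup_le fun j _ => ?_)⟩
  rcases eq_or_ne (q j) 0 with hj | hj
  · simp [hj]
  · exact hmax j (by simpa using hj)

theorem Polynomial.aeval_homogenize_natDegree_pair_zero {R S : Type*} [CommSemiring R]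
    [CommSemiring S] [Algebra R S] (p : R[X]) (x : S) :
    MvPolynomial.aeval ![x, 0] (p.homogenize p.natDegree)
      = algebraMap R S p.leadingCoeff * x ^ p.natDegree := by
  rw [homogenize, map_sum, Finset.sum_eq_single (p.natDegree, 0)]
  · simp [MvPolynomial.aeval_monomial]
  · rintro ⟨k, l⟩ hkl hne
    rw [Finset.HasAntidiagonal.mem_antidiagonal] at hkl
    have hl : l ≠ 0 := by rintro rfl; simp_all
    simp [MvPolynomial.aeval_monomial, hl]
  · simp

theorem Polynomial.aeval_homogenize_of_ne_zero {K L : Type*} [CommSemiring K] [Semifield L]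
    [Algebra K L] {p : K[X]} {n : ℕ} (hn : p.natDegree ≤ n) {x y : L} (hy : y ≠ 0) :
    MvPolynomial.aeval ![x, y] (p.homogenize n) = aeval (x / y) p * y ^ n := by
  rw [MvPolynomial.aeval_def, ← MvPolynomial.eval_map, ← homogenize_map,
    eval_homogenize (natDegree_map_le.trans hn) _ hy]
  simp [eval_map_algebraMap]

theorem MvPolynomial.IsHomogeneous.natDegree_aeval_le {R σ : Type*} [CommSemiring R]
    {φ : MvPolynomial σ R} {m : ℕ} (hφ : φ.IsHomogeneous m) {g : σ → R[X]}
    (hg : ∀ i, (g i).natDegree ≤ 1) : (MvPolynomial.aeval g φ).natDegree ≤ m := by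
  rw [φ.as_sum, map_sum]
  refine natDegree_sum_le_of_forall_le _ _ fun s hs => ?_
  rw [MvPolynomial.aeval_monomial, Finsupp.prod, Polynomial.algebraMap_eq]
  refine (natDegree_C_mul_le _ _).trans ((natDegree_prod_le _ _).trans ?_)
  calc ∑ i ∈ s.support, (g i ^ s i).natDegree ≤ ∑ i ∈ s.support, s i :=
        Finset.sum_le_sum fun i _ => natDegree_pow_le_of_le _ (hg i) |>.trans (by simp)
    _ = m := by
        rw [← hφ (MvPolynomial.mem_support_iff.mp hs), Finsupp.weight_apply, Finsupp.sum]
        simp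

theorem AlgHom.apply_aeval_pair {R A B : Type*} [CommSemiring R] [CommSemiring A]
    [CommSemiring B] [Algebra R A] [Algebra R B] (φ : A →ₐ[R] B) (x y : A)
    (F : MvPolynomial (Fin 2) R) :
    φ (MvPolynomial.aeval ![x, y] F) = MvPolynomial.aeval ![φ x, φ y] F := by
  rw [MvPolynomial.comp_aeval_apply]
  congr 2
  funext i
  fin_cases i <;> rfl

section Mobius

variable {K : Type*} [Field K]

-- `(γX + δ)^m · p((αX + β) / (γX + δ))` with its denominator cleared, when `natDegree p ≤ m`
noncomputable def mobiusNumerator (α β γ δ : K) (m : ℕ) (p : K[X]) : K[X] :=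
  MvPolynomial.aeval ![C α * X + C β, C γ * X + C δ] (p.homogenize m)

variable {α β γ δ : K}

theorem C_mul_X_add_C_ne_zero_of_det_ne_zero (h : α * δ - β * γ ≠ 0) :
    (C γ * X + C δ : K[X]) ≠ 0 := by
  intro h0
  have h1 := congrArg (coeff · 1) h0
  have h2 := congrArg (coeff · 0) h0
  simp only [coeff_add, coeff_C_mul_X, coeff_C, coeff_zero] at h1 h2
  simp_all

variable (α β γ δ)

theorem natDegree_mobiusNumerator_le (m : ℕ) (p : K[X]) :
    (mobiusNumerator α β γ δ m p).natDegree ≤ m :=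
  (isHomogeneous_homogenize p).natDegree_aeval_le fun i => by
    fin_cases i <;> exact natDegree_linear_le

theorem mobiusNumerator_mul {x y : K[X]} {j k : ℕ} (hx : x.natDegree ≤ j)
    (hy : y.natDegree ≤ k) :
    mobiusNumerator α β γ δ (j + k) (x * y)
      = mobiusNumerator α β γ δ j x * mobiusNumerator α β γ δ k y := by
  rw [mobiusNumerator, homogenize_mul _ _ hx hy, map_mul, mobiusNumerator, mobiusNumerator]

theorem mobiusNumerator_C (m : ℕ) (s : K) :
    mobiusNumerator α β γ δ m (C s) = C s * (C γ * X + C δ) ^ m := by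
  simp [mobiusNumerator]

variable {α β γ δ}

theorem algebraMap_mobiusNumerator (hu : (C γ * X + C δ : K[X]) ≠ 0) {m : ℕ} {p : K[X]}
    (hp : p.natDegree ≤ m) :
    algebraMap K[X] (RatFunc K) (mobiusNumerator α β γ δ m p)
      = algebraMap K[X] (RatFunc K) (C γ * X + C δ) ^ m
        * aeval (algebraMap K[X] (RatFunc K) (C α * X + C β)
          / algebraMap K[X] (RatFunc K) (C γ * X + C δ)) p := by
  have := (IsScalarTower.toAlgHom K K[X] (RatFunc K)).apply_aeval_pair (C α * X + C β)
    (C γ * X + C δ) (p.homogenize m)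
  simp only [IsScalarTower.coe_toAlgHom'] at this
  rw [mobiusNumerator, this, aeval_homogenize_of_ne_zero hp (RatFunc.algebraMap_ne_zero hu),
    mul_comm]

theorem aeval_div_C_mul_X_add_C {N D : K[X]} (hD : algebraMap K[X] (RatFunc K) D ≠ 0)
    (a b : K) :
    aeval (algebraMap K[X] (RatFunc K) N / algebraMap K[X] (RatFunc K) D) (C a * X + C b)
      = algebraMap K[X] (RatFunc K) (C a * N + C b * D) / algebraMap K[X] (RatFunc K) D := by
  rw [eq_div_iff hD]
  simp only [map_add, map_mul, aeval_X, aeval_C, add_mul, mul_assoc, div_mul_cancel₀ _ hD,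
    IsScalarTower.algebraMap_apply K K[X] (RatFunc K), Polynomial.algebraMap_eq]

theorem mobiusNumerator_mobiusNumerator (h : α * δ - β * γ ≠ 0) {m : ℕ} {p : K[X]}
    (hp : p.natDegree ≤ m) :
    mobiusNumerator δ (-β) (-γ) α m (mobiusNumerator α β γ δ m p)
      = C ((α * δ - β * γ) ^ m) * p := by
  have hD : (C (-γ) * X + C α : K[X]) ≠ 0 :=
    C_mul_X_add_C_ne_zero_of_det_ne_zero (α := δ) (β := -β)
      (by rwa [show δ * α - -β * -γ = α * δ - β * γ by ring])
  set D := algebraMap K[X] (RatFunc K) (C (-γ) * X + C α)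
  have hD' : D ≠ 0 := RatFunc.algebraMap_ne_zero hD
  set c := algebraMap K[X] (RatFunc K) (C (α * δ - β * γ))
  have hc : c ≠ 0 := RatFunc.algebraMap_ne_zero (C_ne_zero.mpr h)
  have hv : aeval (algebraMap K[X] (RatFunc K) (C δ * X + C (-β)) / D) (C α * X + C β)
      = c * RatFunc.X / D := by
    rw [aeval_div_C_mul_X_add_C hD', ← RatFunc.algebraMap_X, ← map_mul]
    congr 2
    simp only [C_neg, C_sub, C_mul]
    ring
  have hw : aeval (algebraMap K[X] (RatFunc K) (C δ * X + C (-β)) / D) (C γ * X + C δ)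
      = c / D := by
    rw [aeval_div_C_mul_X_add_C hD']
    congr 2
    simp only [C_neg, C_sub, C_mul]
    ring
  apply RatFunc.algebraMap_injective K
  rw [algebraMap_mobiusNumerator hD (natDegree_mobiusNumerator_le _ _ _ _ _ _), mobiusNumerator,
    AlgHom.apply_aeval_pair, hv, hw, aeval_homogenize_of_ne_zero hp (div_ne_zero hc hD'),
    div_div_div_cancel_right₀ hD', mul_div_cancel_left₀ _ hc, RatFunc.aeval_X_left_eq_algebraMap,
    map_mul, C_pow, map_pow, mul_left_comm, ← mul_pow, mul_div_cancel₀ _ hD', mul_comm]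

theorem dvd_of_dvd_mobiusNumerator (h : α * δ - β * γ ≠ 0) {m : ℕ} {p e : K[X]}
    (hp : p.natDegree ≤ m) (he : e ∣ mobiusNumerator α β γ δ m p) :
    mobiusNumerator δ (-β) (-γ) α e.natDegree e ∣ p := by
  obtain ⟨w, hw⟩ := he
  have hunit : IsUnit (C ((α * δ - β * γ) ^ m)) := isUnit_C.mpr (pow_ne_zero _ h).isUnit
  rw [← hunit.dvd_mul_left, ← mobiusNumerator_mobiusNumerator h hp, hw]
  rcases eq_or_ne (e * w) 0 with h0 | h0
  · simp [h0, mobiusNumerator]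
  · have hdeg : e.natDegree + w.natDegree ≤ m := by
      rw [← natDegree_mul (left_ne_zero_of_mul h0) (right_ne_zero_of_mul h0), ← hw]
      exact natDegree_mobiusNumerator_le _ _ _ _ _ _
    obtain ⟨k, rfl⟩ := Nat.exists_eq_add_of_le (le_of_add_le_left hdeg)
    rw [mobiusNumerator_mul _ _ _ _ le_rfl (by omega : w.natDegree ≤ k)]
    exact dvd_mul_right _ _

theorem associated_pow_of_isUnit_mobiusNumerator (h : α * δ - β * γ ≠ 0) {e : K[X]}
    (he : IsUnit (mobiusNumerator δ (-β) (-γ) α e.natDegree e)) :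
    Associated ((C γ * X + C δ) ^ e.natDegree) e := by
  obtain ⟨r, hr, hre⟩ := isUnit_iff.mp he
  have h' : δ * α - -β * -γ ≠ 0 := by rwa [show δ * α - -β * -γ = α * δ - β * γ by ring]
  have hinv := mobiusNumerator_mobiusNumerator h' (le_refl e.natDegree)
  rw [neg_neg, neg_neg, ← hre, mobiusNumerator_C] at hinv
  refine (associated_unit_mul_left _ _ (isUnit_C.mpr hr)).symm.trans ?_
  rw [hinv]
  exact associated_unit_mul_left _ _ (isUnit_C.mpr (pow_ne_zero _ h').isUnit)

theorem isUnit_of_dvd_mobiusNumerator (h : α * δ - β * γ ≠ 0) {p : K[X]} (hp : p ≠ 0)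
    (hu : C γ * X + C δ ∣ mobiusNumerator α β γ δ p.natDegree p) : IsUnit (C γ * X + C δ) := by
  rcases eq_or_ne γ 0 with rfl | hγ
  · have hδ : δ ≠ 0 := by rintro rfl; simp at h
    simpa using isUnit_C.mpr hδ.isUnit
  exfalso
  set x := -δ / γ
  have hux : aeval x (C γ * X + C δ) = 0 := by
    simp only [coe_aeval_eq_eval, eval_add, eval_mul, eval_C, eval_X, x]
    field_simp
    ring
  have hvx : aeval x (C α * X + C β) = -(α * δ - β * γ) / γ := by
    simp only [coe_aeval_eq_eval, eval_add, eval_mul, eval_C, eval_X, x]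
    field_simp
    ring
  obtain ⟨w, hw⟩ := hu
  have h0 := congrArg (aeval x) hw
  rw [map_mul, hux, zero_mul, mobiusNumerator, AlgHom.apply_aeval_pair, hux,
    aeval_homogenize_natDegree_pair_zero, hvx] at h0
  exact mul_ne_zero (leadingCoeff_ne_zero.mpr hp)
    (pow_ne_zero _ (div_ne_zero (neg_ne_zero.mpr h) hγ)) h0

theorem isRelPrimeFamily_mobiusNumerator (h : α * δ - β * γ ≠ 0) {ι : Type*} [Fintype ι]
    {q : ι → K[X]} (hq : IsRelPrimeFamily q) :
    IsRelPrimeFamily fun i =>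
      mobiusNumerator α β γ δ (Finset.univ.sup fun j => (q j).natDegree) (q i) := by
  -- A common divisor `e` is carried by the inverse transformation to a common divisor of the
  -- `q i`, which forces `e ~ (γX + δ)^(natDegree e)`; but `γX + δ` does not divide the image
  -- of a `q i` of top degree.
  intro e he
  have hdeg : ∀ i, (q i).natDegree ≤ Finset.univ.sup fun j => (q j).natDegree :=
    fun i => Finset.le_sup (f := fun j => (q j).natDegree) (Finset.mem_univ i)
  have hassoc := associated_pow_of_isUnit_mobiusNumerator h
    (hq _ fun i => dvd_of_dvd_mobiusNumerator h (hdeg i) (he i))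
  refine hassoc.isUnit_iff.mp ?_
  rcases Nat.eq_zero_or_pos e.natDegree with h0 | hpos
  · simp [h0]
  obtain ⟨i, hi, hin⟩ := exists_ne_zero_natDegree_eq_sup hq.exists_ne_zero
  refine (isUnit_of_dvd_mobiusNumerator h hi ?_).pow _
  rw [hin]
  exact (dvd_pow_self _ hpos.ne').trans (hassoc.dvd.trans (he i))

end Mobius

/-- Proposition 3 of the paper: `a = k(γX+δ)^n` for some nonzero constant `k`. -/
theorem stmt_6 (α β γ δ : ℝ) (h : α * δ - β * γ ≠ 0)
    (M : Matrix (Fin 3) (Fin 3) ℝ) (hM : IsUnit M)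
    (q₁ q₂ : Fin 3 → Polynomial ℝ)
    (hc1 : ∀ d : Polynomial ℝ, (∀ i, d ∣ q₁ i) → IsUnit d)
    (hc2 : ∀ d : Polynomial ℝ, (∀ i, d ∣ q₂ i) → IsUnit d)
    (a : RatFunc ℝ)
    (heq : ∀ i, algebraMap (Polynomial ℝ) (RatFunc ℝ) (∑ j, M i j • q₁ j)
      = a * Polynomial.aeval (mobius α β γ δ) (q₂ i)) :
    ∃ k : ℝ, k ≠ 0 ∧ a = algebraMap (Polynomial ℝ) (RatFunc ℝ)
      (C k * (C γ * X + C δ) ^ (Finset.univ.sup fun i => (q₂ i).natDegree)) := by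
  set n := Finset.univ.sup fun i => (q₂ i).natDegree
  have hu := C_mul_X_add_C_ne_zero_of_det_ne_zero h
  have hg := RatFunc.algebraMap_ne_zero (RatFunc.denom_ne_zero a)
  have hfg : a * algebraMap ℝ[X] (RatFunc ℝ) a.denom = algebraMap ℝ[X] (RatFunc ℝ) a.num := by
    nth_rewrite 1 [← RatFunc.num_div_denom a]
    exact div_mul_cancel₀ _ hg
  have hcross : ∀ i, ((C γ * X + C δ) ^ n * a.denom) * ∑ j, M i j • q₁ j
      = a.num * mobiusNumerator α β γ δ n (q₂ i) := by
    intro i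
    apply RatFunc.algebraMap_injective ℝ
    have hH : algebraMap ℝ[X] (RatFunc ℝ) (mobiusNumerator α β γ δ n (q₂ i))
        = algebraMap ℝ[X] (RatFunc ℝ) (C γ * X + C δ) ^ n * aeval (mobius α β γ δ) (q₂ i) :=
      algebraMap_mobiusNumerator hu
        (Finset.le_sup (f := fun j => (q₂ j).natDegree) (Finset.mem_univ i))
    rw [map_mul, map_mul, map_mul, map_pow, heq i, hH, ← hfg]
    ring
  obtain ⟨c, hc⟩ := associated_of_forall_mul_eq_mul (IsRelPrimeFamily.sum_smul hM hc1)
    (isRelPrimeFamily_mobiusNumerator h hc2) hcross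
  obtain ⟨k, hk, hkc⟩ := isUnit_iff.mp c.isUnit
  refine ⟨k, hk.ne_zero, ?_⟩
  rw [← RatFunc.num_div_denom a, ← hc, ← hkc, map_mul, map_mul, map_mul, div_eq_iff hg]
  ring
end

section
/- (Algebraic core of Theorem 3 of the paper.) Let α, β, γ, δ, k be real numbers with α·δ − β·γ ≠ 0, let n be a natural number, let c : ℝ → ℝ be a function, define ψ̃(t) := (α·t + β)/(γ·t + δ), and define φ : ℝ × ℝ → ℝ × ℝ by φ(t,s) := (ψ̃(t), k·(γ·t + δ)^n·s + c(t)). Suppose there is an infinite set T ⊆ ℝ such that for every t ∈ T one has γ·t + δ ≠ 0, γ·ψ̃(t) + δ ≠ 0, and φ(φ(t,s)) = (t,s) for every s ∈ ℝ. Then either (I) α = −δ and k²·(β·γ + δ²)^n = 1, or (II) α = δ, β = 0, γ = 0, and k²·δ^(2n) = 1. -/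
/-- The real Möbius transformation `ψ̃(t) = (αt+β)/(γt+δ)`. -/
noncomputable def mobiusFun (α β γ δ : ℝ) (t : ℝ) : ℝ := (α * t + β) / (γ * t + δ)

/-- The planar transformation `φ(t,s) = (ψ̃(t), k(γt+δ)ⁿ s + c(t))` associated with
an affine mapping of a rational ruled surface. -/
noncomputable def phiMap (α β γ δ k : ℝ) (n : ℕ) (c : ℝ → ℝ) (ts : ℝ × ℝ) : ℝ × ℝ :=
  (mobiusFun α β γ δ ts.1, k * (γ * ts.1 + δ) ^ n * ts.2 + c ts.1)

/-!
Write `u = γt + δ` and `v = γψ̃(t) + δ`. The first coordinate of `φ ∘ φ = id` says `ψ̃(ψ̃(t)) = t`,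
and clearing the denominators `u, v` turns this into `(α + δ)(γt² + (δ - α)t - β) = 0`. The second
coordinate is an affine map in `s` with slope `k vⁿ · k uⁿ = k² (uv)ⁿ`, which must be `1`, and
`uv = (α + δ)γt + (βγ + δ²)`. Either `α + δ = 0`, which is case (I), or the quadratic
`γt² + (δ - α)t - β` has infinitely many roots, hence vanishes identically, which is case (II).
-/

lemma quadratic_coeffs_eq_zero_of_infinite {R : Type*} [CommRing R] [IsDomain R] {a b c : R}
    {T : Set R} (hT : T.Infinite) (h : ∀ t ∈ T, a * t ^ 2 + b * t + c = 0) :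
    a = 0 ∧ b = 0 ∧ c = 0 := by
  open Polynomial in
  have hp : (C a * X ^ 2 + C b * X + C c : R[X]) = 0 :=
    eq_zero_of_infinite_isRoot _ <| hT.mono fun t ht ↦ by simp [h t ht]
  refine ⟨?_, ?_, ?_⟩
  · simpa using congrArg (coeff · 2) hp
  · simpa using congrArg (coeff · 1) hp
  · simpa using congrArg (coeff · 0) hp

lemma mul_eq_one_of_affine_comp_eq_id {R : Type*} [CommRing R] {a b a' b' : R}
    (h : ∀ s, a' * (a * s + b) + b' = s) : a' * a = 1 := by
  linear_combination h 1 - h 0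

section Mobius

variable {α β γ δ t : ℝ}

lemma mobiusFun_denom_mul_denom (hu : γ * t + δ ≠ 0) :
    (γ * mobiusFun α β γ δ t + δ) * (γ * t + δ) = (α + δ) * γ * t + (β * γ + δ ^ 2) := by
  rw [mobiusFun]
  field_simp
  ring

lemma mobiusFun_mobiusFun_eq_self_iff (hu : γ * t + δ ≠ 0)
    (hv : γ * mobiusFun α β γ δ t + δ ≠ 0) :
    mobiusFun α β γ δ (mobiusFun α β γ δ t) = t ↔
      (α + δ) * (γ * t ^ 2 + (δ - α) * t - β) = 0 := by
  have huv := mobiusFun_denom_mul_denom (α := α) (β := β) hu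
  have hψ : mobiusFun α β γ δ t * (γ * t + δ) = α * t + β := div_mul_cancel₀ _ hu
  generalize mobiusFun α β γ δ t = ψ at hv huv hψ ⊢
  rw [mobiusFun, div_eq_iff hv, ← mul_left_inj' hu]
  constructor <;> intro h <;> linear_combination -h + α * hψ - t * huv

end Mobius

lemma phiMap_phiMap_eq_self_conditions {α β γ δ k t : ℝ} {n : ℕ} {c : ℝ → ℝ}
    (hu : γ * t + δ ≠ 0) (hv : γ * mobiusFun α β γ δ t + δ ≠ 0)
    (hinv : ∀ s, phiMap α β γ δ k n c (phiMap α β γ δ k n c (t, s)) = (t, s)) :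
    (α + δ) * (γ * t ^ 2 + (δ - α) * t - β) = 0 ∧
      k ^ 2 * ((α + δ) * γ * t + (β * γ + δ ^ 2)) ^ n = 1 := by
  have hψψ : mobiusFun α β γ δ (mobiusFun α β γ δ t) = t := by
    simpa [phiMap] using congrArg Prod.fst (hinv 0)
  have hslope : k * (γ * mobiusFun α β γ δ t + δ) ^ n * (k * (γ * t + δ) ^ n) = 1 :=
    mul_eq_one_of_affine_comp_eq_id fun s ↦ by simpa [phiMap] using congrArg Prod.snd (hinv s)
  refine ⟨(mobiusFun_mobiusFun_eq_self_iff hu hv).1 hψψ, ?_⟩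
  rw [← mobiusFun_denom_mul_denom hu, mul_pow, ← hslope]
  ring

theorem stmt_12_general (α β γ δ k : ℝ) (n : ℕ) (c : ℝ → ℝ)
    (T : Set ℝ) (hT : T.Infinite)
    (hcond : ∀ t ∈ T, γ * t + δ ≠ 0 ∧ γ * mobiusFun α β γ δ t + δ ≠ 0 ∧
      ∀ s : ℝ, phiMap α β γ δ k n c (phiMap α β γ δ k n c (t, s)) = (t, s)) :
    (α = -δ ∧ k ^ 2 * (β * γ + δ ^ 2) ^ n = 1) ∨
    (α = δ ∧ β = 0 ∧ γ = 0 ∧ k ^ 2 * δ ^ (2 * n) = 1) := by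
  have hconds := fun t ht ↦
    have ⟨hu, hv, hinv⟩ := hcond t ht
    phiMap_phiMap_eq_self_conditions hu hv hinv
  obtain ⟨t₀, ht₀⟩ := hT.nonempty
  have hk := (hconds t₀ ht₀).2
  by_cases htrace : α + δ = 0
  · left
    refine ⟨by linarith, ?_⟩
    simpa [htrace] using hk
  · right
    obtain ⟨hγ, hδα, hβ⟩ := quadratic_coeffs_eq_zero_of_infinite hT fun t ht ↦
      by simpa [htrace, sub_eq_add_neg] using (hconds t ht).1
    refine ⟨by linarith, neg_eq_zero.1 hβ, hγ, ?_⟩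
    simpa [hγ, hβ, pow_mul] using hk

/-- Algebraic core of Theorem 3 of the paper: if `φ` is an involution on an
infinite set of parameters, then either (I) `α = -δ` and `k²(βγ+δ²)ⁿ = 1`, or
(II) `α = δ`, `β = 0`, `γ = 0`, and `k²δ^(2n) = 1`. -/
theorem stmt_12 (α β γ δ k : ℝ) (h : α * δ - β * γ ≠ 0) (n : ℕ) (c : ℝ → ℝ)
    (T : Set ℝ) (hT : T.Infinite)
    (hcond : ∀ t ∈ T, γ * t + δ ≠ 0 ∧ γ * mobiusFun α β γ δ t + δ ≠ 0 ∧
      ∀ s : ℝ, phiMap α β γ δ k n c (phiMap α β γ δ k n c (t, s)) = (t, s)) :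
    (α = -δ ∧ k ^ 2 * (β * γ + δ ^ 2) ^ n = 1) ∨
    (α = δ ∧ β = 0 ∧ γ = 0 ∧ k ^ 2 * δ ^ (2 * n) = 1) :=
  stmt_12_general α β γ δ k n c T hT hcond
end

section
/- (Algebraic form of Theorem 2 of the paper.) Let α, β, γ, δ be real numbers with α·δ − β·γ ≠ 0 and ψ̃(t) := (α·t + β)/(γ·t + δ). Let M ∈ Matrix (Fin 3) (Fin 3) ℝ be invertible, b ∈ ℝ³, let q₁, q₂ : Fin 3 → ℝ[X] be triples of polynomials each of whose components has only unit common divisors (in particular, not all zero), let n := max over i of natDegree (q₂ i), let p₁, p₂ : ℝ → ℝ³ be functions, and let a, c : ℝ → ℝ be functions that agree, off a finite set, with evaluations of rational functions a_r, c_r ∈ RatFunc ℝ. Suppose there is a finite set F ⊆ ℝ such that for every t ∉ F (with γ·t + δ ≠ 0 and all evaluations defined) and every s ∈ ℝ: M.mulVec (p₁(t) + s • (fun i => Polynomial.eval t (q₁ i))) + b = p₂(ψ̃(t)) + (a(t)·s + c(t)) • (fun i => Polynomial.eval (ψ̃ t) (q₂ i)). Then there exists a nonzero real number k such that a_r = algebraMap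 (C k * (C γ * X + C δ)^n) in RatFunc ℝ; equivalently, a(t) = k·(γ·t + δ)^n for all t outside a finite set. -/
/-!
From the hypothesis at `s = 0` and `s = 1`, `M q₁(t) = a(t) q₂(ψ̃ t)` off a finite set. Writing
`a = num / den` and multiplying by `(γt + δ)ⁿ` turns this into the polynomial identity
`P (γX + δ)ⁿ den = num Q`, where `P = M q₁` and `Q = (γX + δ)ⁿ q₂((αX + β)/(γX + δ))`.
Both `P` and `Q` have only unit common divisors, because `M` and the Möbius substitution are
invertible. Hence `den`, being coprime to `num`, divides every `Qᵢ` and is `1`. Some `Qᵢ` is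
coprime to `γX + δ`, so `(γX + δ)ⁿ` divides `num`, and the quotient divides every `Pᵢ`, so it is
a nonzero constant.
-/

open Polynomial

def HasOnlyUnitCommonDivisors {R ι : Type*} [Monoid R] (q : ι → R) : Prop :=
  ∀ d, (∀ i, d ∣ q i) → IsUnit d

namespace HasOnlyUnitCommonDivisors

variable {R ι : Type*}

lemma exists_ne_zero [MonoidWithZero R] [Nontrivial R] {q : ι → R}
    (hq : HasOnlyUnitCommonDivisors q) : ∃ i, q i ≠ 0 := by
  by_contra! h
  exact not_isUnit_zero (hq 0 fun i => (h i).symm ▸ dvd_rfl)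

lemma mulVec [CommSemiring R] [Fintype ι] [DecidableEq ι] {A : Matrix ι ι R} (hA : IsUnit A)
    {v : ι → R} (hv : HasOnlyUnitCommonDivisors v) : HasOnlyUnitCommonDivisors (A.mulVec v) := by
  have dvd_mulVec : ∀ (B : Matrix ι ι R) {d : R} {w : ι → R}, (∀ i, d ∣ w i) →
      ∀ i, d ∣ B.mulVec w i := fun B d w hw i =>
    Finset.dvd_sum fun j _ => (hw j).mul_left _
  obtain ⟨B, hB⟩ := hA.exists_left_inv
  intro d hd
  refine hv d fun i => ?_
  simpa [Matrix.mulVec_mulVec, hB] using dvd_mulVec B hd i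

end HasOnlyUnitCommonDivisors

lemma Matrix.mulVec_eq_smul_of_forall_affine {R m n : Type*} [CommRing R] [Fintype n]
    {M : Matrix m n R} {p v : n → R} {p' w b : m → R} {a c : R}
    (h : ∀ s : R, M.mulVec (p + s • v) + b = p' + (a * s + c) • w) : M.mulVec v = a • w := by
  have h0 := h 0
  have h1 := h 1
  simp only [zero_smul, add_zero, mul_zero, zero_add, one_smul, mul_one, Matrix.mulVec_add,
    add_smul] at h0 h1
  linear_combination (norm := module) h1 - h0

namespace Polynomial

lemma eval_map_C_mulVec {R m n : Type*} [CommSemiring R] [Fintype n] (M : Matrix m n R)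
    (q : n → R[X]) (t : R) (i : m) :
    ((M.map C).mulVec q i).eval t = M.mulVec (fun j => (q j).eval t) i := by
  rw [← coe_evalRingHom, RingHom.map_mulVec, Matrix.map_map]
  simp [Function.comp_def]

lemma exists_coeff_sup_natDegree_ne_zero {R ι : Type*} [Semiring R] [Fintype ι] {q : ι → R[X]}
    (hq : ∃ i, q i ≠ 0) : ∃ i, (q i).coeff (Finset.univ.sup fun i => (q i).natDegree) ≠ 0 := by
  obtain ⟨i, hi⟩ := hq
  obtain ⟨j, -, hj⟩ := Finset.exists_mem_eq_sup Finset.univ ⟨i, Finset.mem_univ i⟩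
    fun i => (q i).natDegree
  rw [hj]
  by_cases hj0 : q j = 0
  · have hi0 : (q i).natDegree = 0 := by
      simpa [hj, hj0] using Finset.le_sup (f := fun i => (q i).natDegree) (Finset.mem_univ i)
    exact ⟨i, by rw [hj0, natDegree_zero, ← hi0]; exact leadingCoeff_ne_zero.2 hi⟩
  · exact ⟨j, leadingCoeff_ne_zero.2 hj0⟩

lemma exists_eq_C_mul_of_mul_eq_mul {R ι : Type*} [CommRing R] [IsDomain R] {P Q : ι → R[X]}
    {N E : R[X]} (hP : HasOnlyUnitCommonDivisors P) (hE : E ≠ 0) {i₀ : ι}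
    (hcop : IsCoprime E (Q i₀)) (h : ∀ i, P i * E = N * Q i) : ∃ k, IsUnit k ∧ N = C k * E := by
  obtain ⟨A, hA⟩ := hcop.dvd_of_dvd_mul_right ⟨P i₀, by rw [← h, mul_comm]⟩
  have hPA : ∀ i, P i = A * Q i := fun i =>
    mul_right_cancel₀ hE (by rw [h, hA]; ring)
  obtain ⟨k, hk, rfl⟩ := isUnit_iff.1 (hP A fun i => ⟨Q i, hPA i⟩)
  exact ⟨k, hk, by rw [hA, mul_comm]⟩

end Polynomial

lemma RatFunc.denom_eq_one_of_mul_denom_eq_num_mul {K ι : Type*} [Field K] {P Q : ι → K[X]}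
    (hQ : HasOnlyUnitCommonDivisors Q) {r : RatFunc K} (h : ∀ i, P i * r.denom = r.num * Q i) :
    r.denom = 1 :=
  (monic_denom r).eq_one_of_isUnit <| hQ _ fun i =>
    (isCoprime_num_denom r).symm.dvd_of_dvd_mul_left ⟨P i, by rw [← h i, mul_comm]⟩

namespace Polynomial

variable {K : Type*} [Field K] {α β γ δ : K}

lemma not_both_zero_of_det_ne_zero (hdet : α * δ - β * γ ≠ 0) : ¬(γ = 0 ∧ δ = 0) := by
  rintro ⟨rfl, rfl⟩; simp at hdet

lemma not_both_zero_of_det_ne_zero' (hdet : α * δ - β * γ ≠ 0) : ¬(-γ = 0 ∧ α = 0) := by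
  rintro ⟨hγ, rfl⟩; simp_all

lemma linear_ne_zero (hγδ : ¬(γ = 0 ∧ δ = 0)) : C γ * X + C δ ≠ 0 := fun h0 =>
  hγδ ⟨by simpa using congrArg (coeff · 1) h0, by simpa using congrArg (coeff · 0) h0⟩

lemma eq_of_eval_eq_of_linear_ne_zero [Infinite K] (hγδ : ¬(γ = 0 ∧ δ = 0))
    {p q : K[X]} {S : Set K} (hS : S.Finite)
    (h : ∀ t ∉ S, γ * t + δ ≠ 0 → p.eval t = q.eval t) : p = q := by
  have hD := linear_ne_zero hγδ
  refine eq_of_infinite_eval_eq p q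
    ((hS.union (finite_setOfPred_isRoot hD)).infinite_compl.mono fun t ht => ?_)
  simp only [Set.mem_compl_iff, Set.mem_union, Set.mem_ofPred_eq, IsRoot.def, not_or] at ht
  exact h t ht.1 (by simpa using ht.2)

/-- `(γX + δ)ⁿ q((αX + β)/(γX + δ))` when `q.natDegree ≤ n`; only the coefficients of `q`
of index at most `n` enter. -/
noncomputable def moebiusSubst (α β γ δ : K) (n : ℕ) (q : K[X]) : K[X] :=
  ∑ j ∈ Finset.range (n + 1), C (q.coeff j) * (C α * X + C β) ^ j * (C γ * X + C δ) ^ (n - j)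

lemma natDegree_moebiusSubst_le (n : ℕ) (q : K[X]) :
    (moebiusSubst α β γ δ n q).natDegree ≤ n := by
  refine natDegree_sum_le_of_forall_le _ _ fun j hj => ?_
  have hj : j ≤ n := Nat.lt_succ_iff.1 (Finset.mem_range.1 hj)
  refine (natDegree_mul_le.trans (add_le_add natDegree_mul_le
    (natDegree_pow_le_of_le _ natDegree_linear_le))).trans ?_
  have := natDegree_pow_le_of_le j (natDegree_linear_le (a := α) (b := β))
  simp only [natDegree_C, zero_add]
  omega

lemma eval_moebiusSubst {n : ℕ} {q : K[X]} (hq : q.natDegree ≤ n) {t : K}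
    (ht : γ * t + δ ≠ 0) :
    (moebiusSubst α β γ δ n q).eval t = (γ * t + δ) ^ n * q.eval ((α * t + β) / (γ * t + δ)) := by
  rw [moebiusSubst, eval_finsetSum, eval_eq_sum_range' (Nat.lt_succ_of_le hq), Finset.mul_sum]
  refine Finset.sum_congr rfl fun j hj => ?_
  have hn : n = (n - j) + j := by have := Finset.mem_range.1 hj; omega
  simp only [eval_mul, eval_pow, eval_add, eval_C, eval_X, div_pow]
  rw [hn, pow_add, Nat.add_sub_cancel, div_eq_mul_inv]
  linear_combination (q.coeff j * (α * t + β) ^ j * (γ * t + δ) ^ (n - j)) *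
    (mul_inv_cancel₀ (pow_ne_zero j ht)).symm

lemma moebiusSubst_zero (n : ℕ) : moebiusSubst α β γ δ n 0 = 0 := by
  simp [moebiusSubst]

lemma moebiusSubst_C (m : ℕ) (u : K) :
    moebiusSubst α β γ δ m (C u) = C u * (C γ * X + C δ) ^ m := by
  rw [moebiusSubst, Finset.sum_eq_single 0 (fun j _ hj => by simp [coeff_C, hj])
    (by simp)]
  simp

lemma moebiusSubst_mul [Infinite K] (hγδ : ¬(γ = 0 ∧ δ = 0)) {m n : ℕ} {u v : K[X]}
    (hu : u.natDegree ≤ m) (hv : v.natDegree ≤ n) :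
    moebiusSubst α β γ δ (m + n) (u * v) = moebiusSubst α β γ δ m u * moebiusSubst α β γ δ n v := by
  refine eq_of_eval_eq_of_linear_ne_zero hγδ Set.finite_empty fun t _ ht => ?_
  rw [eval_mul, eval_moebiusSubst (natDegree_mul_le.trans (add_le_add hu hv)) ht,
    eval_moebiusSubst hu ht, eval_moebiusSubst hv ht, eval_mul, pow_add]
  ring

/-- `t ↦ (δt - β)/(-γt + α)` inverts `t ↦ (αt + β)/(γt + δ)`. -/
lemma moebiusSubst_inv_moebiusSubst [Infinite K] (hdet : α * δ - β * γ ≠ 0) {n : ℕ} {q : K[X]}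
    (hq : q.natDegree ≤ n) :
    moebiusSubst δ (-β) (-γ) α n (moebiusSubst α β γ δ n q) = C ((α * δ - β * γ) ^ n) * q := by
  refine eq_of_eval_eq_of_linear_ne_zero (not_both_zero_of_det_ne_zero' hdet) Set.finite_empty
    fun t _ ht => ?_
  have hden : γ * ((δ * t + -β) / (-γ * t + α)) + δ = (α * δ - β * γ) / (-γ * t + α) := by
    rw [mul_div_assoc', div_add' _ _ _ ht]; ring
  have hnum : (α * ((δ * t + -β) / (-γ * t + α)) + β) / ((α * δ - β * γ) / (-γ * t + α)) = t := by
    rw [mul_div_assoc', div_add' _ _ _ ht, div_div_div_cancel_right₀ ht, div_eq_iff hdet]; ring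
  rw [eval_moebiusSubst (natDegree_moebiusSubst_le _ _) ht,
    eval_moebiusSubst hq (hden ▸ div_ne_zero hdet ht), hden, hnum, eval_mul, eval_C, div_pow]
  rw [neg_mul] at ht
  field_simp

lemma moebiusSubst_moebiusSubst_inv [Infinite K] (hdet : α * δ - β * γ ≠ 0) {n : ℕ} {q : K[X]}
    (hq : q.natDegree ≤ n) :
    moebiusSubst α β γ δ n (moebiusSubst δ (-β) (-γ) α n q) = C ((α * δ - β * γ) ^ n) * q := by
  have hdet' : δ * α - -β * -γ = α * δ - β * γ := by ring
  have := moebiusSubst_inv_moebiusSubst (α := δ) (β := -β) (γ := -γ) (δ := α) (hdet'.symm ▸ hdet) hq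
  rwa [neg_neg, neg_neg, hdet'] at this

lemma moebiusSubst_ne_zero [Infinite K] (hdet : α * δ - β * γ ≠ 0) {n : ℕ} {q : K[X]}
    (hq : q.natDegree ≤ n) (hq0 : q ≠ 0) : moebiusSubst α β γ δ n q ≠ 0 := by
  intro h0
  have := moebiusSubst_inv_moebiusSubst hdet hq
  rw [h0, moebiusSubst_zero, eq_comm, mul_eq_zero, C_eq_zero] at this
  exact this.elim (pow_ne_zero n hdet) hq0

lemma isCoprime_linear_linear (hdet : α * δ - β * γ ≠ 0) :
    IsCoprime (C γ * X + C δ) (C α * X + C β) := by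
  have h1 : C (α * δ - β * γ)⁻¹ * (C α * C δ - C β * C γ) = 1 := by
    rw [← C_mul, ← C_mul, ← C_sub, ← C_mul, inv_mul_cancel₀ hdet, C_1]
  exact ⟨C α * C (α * δ - β * γ)⁻¹, -(C γ * C (α * δ - β * γ)⁻¹), by linear_combination h1⟩

lemma exists_moebiusSubst_eq_linear_mul_add (n : ℕ) (q : K[X]) : ∃ R,
    moebiusSubst α β γ δ n q = (C γ * X + C δ) * R + C (q.coeff n) * (C α * X + C β) ^ n := by
  obtain ⟨R, hR⟩ : C γ * X + C δ ∣ ∑ j ∈ Finset.range n,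
      C (q.coeff j) * (C α * X + C β) ^ j * (C γ * X + C δ) ^ (n - j) :=
    Finset.dvd_sum fun j hj => (dvd_pow_self _ (by simp at hj; omega)).mul_left _
  exact ⟨R, by rw [moebiusSubst, Finset.sum_range_succ, hR, Nat.sub_self, pow_zero, mul_one]⟩

/-- Modulo `γX + δ` only the top term `q.coeff n • (αX + β)ⁿ` survives. -/
lemma isCoprime_linear_moebiusSubst (hdet : α * δ - β * γ ≠ 0) {n : ℕ} {q : K[X]}
    (hq : q.coeff n ≠ 0) : IsCoprime (C γ * X + C δ) (moebiusSubst α β γ δ n q) := by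
  obtain ⟨R, hR⟩ := exists_moebiusSubst_eq_linear_mul_add (α := α) (β := β) (γ := γ) (δ := δ) n q
  rw [hR]
  refine IsCoprime.mul_add_left_right ?_ R
  exact (isCoprime_mul_unit_left_right (isUnit_C.2 hq.isUnit) _ _).2
    (isCoprime_linear_linear hdet).pow_right

/-- A common divisor `d` of the `Qᵢ` has an inverse substitution dividing every `qᵢ`, hence
constant; so `d` is a constant multiple of `(γX + δ)ᵐ`, which is coprime to `Q i₀`. -/
lemma hasOnlyUnitCommonDivisors_moebiusSubst [Infinite K] {ι : Type*} (hdet : α * δ - β * γ ≠ 0)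
    {q : ι → K[X]} (hq : HasOnlyUnitCommonDivisors q) {n : ℕ} (hn : ∀ i, (q i).natDegree ≤ n)
    {i₀ : ι} (hi₀ : (q i₀).coeff n ≠ 0) :
    HasOnlyUnitCommonDivisors fun i => moebiusSubst α β γ δ n (q i) := by
  intro d hd
  have hQ₀ : moebiusSubst α β γ δ n (q i₀) ≠ 0 :=
    moebiusSubst_ne_zero hdet (hn i₀) fun h0 => by simp [h0] at hi₀
  have hd0 : d ≠ 0 := by rintro rfl; exact hQ₀ (zero_dvd_iff.1 (hd i₀))
  have hdn : d.natDegree ≤ n :=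
    (natDegree_le_of_dvd (hd i₀) hQ₀).trans (natDegree_moebiusSubst_le _ _)
  set m := d.natDegree
  have hinv : ∀ i, moebiusSubst δ (-β) (-γ) α m d ∣ q i := by
    intro i
    obtain ⟨e, he⟩ : d ∣ moebiusSubst α β γ δ n (q i) := hd i
    have he_deg : e.natDegree ≤ n - m := by
      rcases eq_or_ne e 0 with rfl | he0
      · simp
      have := natDegree_moebiusSubst_le (α := α) (β := β) (γ := γ) (δ := δ) n (q i)
      rw [he, natDegree_mul hd0 he0] at this
      omega
    have hmul := moebiusSubst_mul (α := δ) (β := -β) (not_both_zero_of_det_ne_zero' hdet)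
      (le_refl m) he_deg
    rw [Nat.add_sub_cancel' hdn, ← he, moebiusSubst_inv_moebiusSubst hdet (hn i)] at hmul
    exact (isUnit_C.2 (pow_ne_zero n hdet).isUnit).dvd_mul_left.1 ⟨_, hmul⟩
  obtain ⟨u, hu, hCu⟩ := isUnit_iff.1 (hq _ hinv)
  have hd_eq : C ((α * δ - β * γ) ^ m) * d = C u * (C γ * X + C δ) ^ m := by
    rw [← moebiusSubst_moebiusSubst_inv hdet le_rfl, ← hCu, moebiusSubst_C]
  have hcop : IsCoprime (C ((α * δ - β * γ) ^ m) * d) (moebiusSubst α β γ δ n (q i₀)) := by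
    rw [hd_eq, isCoprime_mul_unit_left_left (isUnit_C.2 hu)]
    exact (isCoprime_linear_moebiusSubst hdet hi₀).pow_left
  rw [isCoprime_mul_unit_left_left (isUnit_C.2 (pow_ne_zero m hdet).isUnit)] at hcop
  exact hcop.isUnit_of_dvd (hd i₀)

lemma mul_linear_pow_mul_denom_eq [Infinite K] (hγδ : ¬(γ = 0 ∧ δ = 0)) {n : ℕ} {P q : K[X]}
    (hq : q.natDegree ≤ n) {r : RatFunc K} {S : Set K} (hS : S.Finite)
    (h : ∀ t ∉ S, γ * t + δ ≠ 0 →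
      P.eval t = r.eval (RingHom.id K) t * q.eval ((α * t + β) / (γ * t + δ))) :
    P * (C γ * X + C δ) ^ n * r.denom = r.num * moebiusSubst α β γ δ n q := by
  refine eq_of_eval_eq_of_linear_ne_zero hγδ (hS.union (finite_setOfPred_isRoot r.denom_ne_zero))
    fun t ht hD => ?_
  simp only [Set.mem_union, Set.mem_ofPred_eq, IsRoot.def, not_or] at ht
  simp only [eval_mul, eval_pow, eval_add, eval_C, eval_X, eval_moebiusSubst hq hD, h t ht.1 hD,
    RatFunc.eval, eval₂_id]
  field_simp [ht.2]

end Polynomial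

theorem stmt_15_general (α β γ δ : ℝ) (h : α * δ - β * γ ≠ 0)
    (M : Matrix (Fin 3) (Fin 3) ℝ) (hM : IsUnit M) (b : Fin 3 → ℝ)
    (q₁ q₂ : Fin 3 → Polynomial ℝ)
    (hc1 : ∀ d : Polynomial ℝ, (∀ i, d ∣ q₁ i) → IsUnit d)
    (hc2 : ∀ d : Polynomial ℝ, (∀ i, d ∣ q₂ i) → IsUnit d)
    (p₁ p₂ : ℝ → Fin 3 → ℝ) (a c : ℝ → ℝ) (ar : RatFunc ℝ)
    (Fa : Set ℝ) (hFa : Fa.Finite)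
    (ha : ∀ t ∉ Fa, a t = RatFunc.eval (RingHom.id ℝ) t ar)
    (F : Set ℝ) (hF : F.Finite)
    (heq : ∀ t ∉ F, γ * t + δ ≠ 0 → ∀ s : ℝ,
      M.mulVec (p₁ t + s • fun i => (q₁ i).eval t) + b
        = p₂ ((α * t + β) / (γ * t + δ)) +
          (a t * s + c t) • fun i => (q₂ i).eval ((α * t + β) / (γ * t + δ))) :
    ∃ k : ℝ, k ≠ 0 ∧
      ar = algebraMap (Polynomial ℝ) (RatFunc ℝ)
        (C k * (C γ * X + C δ) ^ (Finset.univ.sup fun i => (q₂ i).natDegree)) ∧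
      ∃ G : Set ℝ, G.Finite ∧ ∀ t ∉ G,
        a t = k * (γ * t + δ) ^ (Finset.univ.sup fun i => (q₂ i).natDegree) := by
  set n := Finset.univ.sup fun i => (q₂ i).natDegree
  have hγδ := not_both_zero_of_det_ne_zero h
  have hn : ∀ i, (q₂ i).natDegree ≤ n := fun i =>
    Finset.le_sup (f := fun i => (q₂ i).natDegree) (Finset.mem_univ i)
  obtain ⟨i₀, hi₀⟩ := exists_coeff_sup_natDegree_ne_zero
    (HasOnlyUnitCommonDivisors.exists_ne_zero hc2)
  have hPQ : ∀ i, (M.map C).mulVec q₁ i * (C γ * X + C δ) ^ n * ar.denom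
      = ar.num * moebiusSubst α β γ δ n (q₂ i) := fun i =>
    mul_linear_pow_mul_denom_eq hγδ (hn i) (hF.union hFa) fun t ht hD => by
      rw [Set.mem_union, not_or] at ht
      rw [← ha t ht.2, eval_map_C_mulVec, Matrix.mulVec_eq_smul_of_forall_affine (heq t ht.1 hD)]
      rfl
  have hden : ar.denom = 1 := RatFunc.denom_eq_one_of_mul_denom_eq_num_mul
    (hasOnlyUnitCommonDivisors_moebiusSubst h hc2 hn hi₀) hPQ
  simp only [hden, mul_one] at hPQ
  have hMC : IsUnit (M.map C) := hM.map (RingHom.mapMatrix C)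
  obtain ⟨k, hk, hnum⟩ := exists_eq_C_mul_of_mul_eq_mul (HasOnlyUnitCommonDivisors.mulVec hMC hc1)
    (Q := fun i => moebiusSubst α β γ δ n (q₂ i)) (pow_ne_zero n (linear_ne_zero hγδ))
    (isCoprime_linear_moebiusSubst h hi₀).pow_left hPQ
  have har : ar = algebraMap ℝ[X] (RatFunc ℝ) (C k * (C γ * X + C δ) ^ n) := by
    rw [← hnum, ← RatFunc.num_div_denom ar, hden, map_one, div_one, RatFunc.num_algebraMap]
  refine ⟨k, hk.ne_zero, har, Fa, hFa, fun t ht => ?_⟩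
  rw [ha t ht, har, RatFunc.eval_algebraMap]
  simp

/-- Algebraic form of Theorem 2 of the paper: if an affine map `x ↦ Mx + b`
(with `M` invertible) carries the ruled parametrization `p₁ + s q₁` into
`p₂(ψ̃(t)) + (a(t)s + c(t)) q₂(ψ̃(t))` for all parameters outside a finite set,
where `a` and `c` agree off finite sets with rational functions `ar`, `cr`,
then `ar = k(γX+δ)ⁿ` for some nonzero constant `k`; equivalently,
`a(t) = k(γt+δ)ⁿ` outside a finite set. -/
theorem stmt_15 (α β γ δ : ℝ) (h : α * δ - β * γ ≠ 0)
    (M : Matrix (Fin 3) (Fin 3) ℝ) (hM : IsUnit M) (b : Fin 3 → ℝ)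
    (q₁ q₂ : Fin 3 → Polynomial ℝ)
    (hc1 : ∀ d : Polynomial ℝ, (∀ i, d ∣ q₁ i) → IsUnit d)
    (hc2 : ∀ d : Polynomial ℝ, (∀ i, d ∣ q₂ i) → IsUnit d)
    (p₁ p₂ : ℝ → Fin 3 → ℝ) (a c : ℝ → ℝ) (ar cr : RatFunc ℝ)
    (Fa : Set ℝ) (hFa : Fa.Finite)
    (ha : ∀ t ∉ Fa, a t = RatFunc.eval (RingHom.id ℝ) t ar)
    (Fc : Set ℝ) (hFc : Fc.Finite)
    (hc : ∀ t ∉ Fc, c t = RatFunc.eval (RingHom.id ℝ) t cr)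
    (F : Set ℝ) (hF : F.Finite)
    (heq : ∀ t ∉ F, γ * t + δ ≠ 0 → ∀ s : ℝ,
      M.mulVec (p₁ t + s • fun i => (q₁ i).eval t) + b
        = p₂ ((α * t + β) / (γ * t + δ)) +
          (a t * s + c t) • fun i => (q₂ i).eval ((α * t + β) / (γ * t + δ))) :
    ∃ k : ℝ, k ≠ 0 ∧
      ar = algebraMap (Polynomial ℝ) (RatFunc ℝ)
        (C k * (C γ * X + C δ) ^ (Finset.univ.sup fun i => (q₂ i).natDegree)) ∧
      ∃ G : Set ℝ, G.Finite ∧ ∀ t ∉ G,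
        a t = k * (γ * t + δ) ^ (Finset.univ.sup fun i => (q₂ i).natDegree) :=
  stmt_15_general α β γ δ h M hM b q₁ q₂ hc1 hc2 p₁ p₂ a c ar Fa hFa ha F hF heq
end
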